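/- If 0 ≤ ε < 1/(2π), then F_{D,ε} : ℝ³ → ℝ³ is a bijection, and the induced map f_{D,ε} : 𝕋³ → 𝕋³ is a bijection of the torus; thus f_{D,ε} is a diffeomorphism of 𝕋³ for all 0 ≤ ε < 1/(2π). -/
import Mathlib


/-- Lift to `ℝ³` of the dissipative family `f_{D,ε}`. -/
noncomputable def FD (ε : ℝ) (v : Fin 3 → ℝ) : Fin 3 → ℝ :=
  ![2 * v 0 + v 1 + ε * Real.sin (2 * Real.pi * v 0),
    v 0 + 2 * v 1 + v 2,
    v 1 + v 2]

/-- The projection `ℝ³ → 𝕋³ = ℝ³/ℤ³`. -/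
noncomputable def torusProj (v : Fin 3 → ℝ) : Fin 3 → AddCircle (1 : ℝ) :=
  fun i => (v i : AddCircle (1 : ℝ))

lemma abs_sin_sub_sin_le' (x y : ℝ) : |Real.sin x - Real.sin y| ≤ |x - y| := by
  rw [Real.sin_sub_sin, abs_mul, abs_mul, abs_two]
  have h1 : |Real.sin ((x - y) / 2)| ≤ |x - y| / 2 := by
    have := Real.abs_sin_le_abs (x := (x - y) / 2)
    rwa [abs_div, abs_two] at this
  have h2 : |Real.cos ((x + y) / 2)| ≤ 1 := Real.abs_cos_le_one _
  have h3 : (0:ℝ) ≤ |Real.sin ((x - y) / 2)| := abs_nonneg _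
  nlinarith [abs_nonneg (x - y)]

noncomputable def phiD (ε : ℝ) (x : ℝ) : ℝ := x + ε * Real.sin (2 * Real.pi * x)

lemma phiD_strictMono {ε : ℝ} (hε0 : 0 ≤ ε) (hε : ε < 1 / (2 * Real.pi)) :
    StrictMono (phiD ε) := by
  intro x y hxy
  have hπ : (0:ℝ) < 2 * Real.pi := by positivity
  have hε2 : ε * (2 * Real.pi) < 1 := (lt_div_iff₀ hπ).mp hε
  have h1 : |Real.sin (2 * Real.pi * y) - Real.sin (2 * Real.pi * x)|
      ≤ |2 * Real.pi * y - 2 * Real.pi * x| := abs_sin_sub_sin_le' _ _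
  have h2 : |2 * Real.pi * y - 2 * Real.pi * x| = 2 * Real.pi * (y - x) := by
    rw [abs_of_nonneg (by nlinarith)]; ring
  rw [h2] at h1
  have h3 := (abs_le.mp h1).1
  have h4 : ε * (Real.sin (2 * Real.pi * y) - Real.sin (2 * Real.pi * x))
      ≥ ε * (-(2 * Real.pi * (y - x))) := mul_le_mul_of_nonneg_left (by linarith) hε0
  have h5 : ε * (2 * Real.pi * (y - x)) < y - x := by nlinarith
  simp only [phiD]
  nlinarith

lemma phiD_surjective {ε : ℝ} (hε0 : 0 ≤ ε) : Function.Surjective (phiD ε) := by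
  intro t
  have hcont : Continuous (phiD ε) := by unfold phiD; continuity
  have h1 : phiD ε (t - ε) ≤ t := by
    have := Real.sin_le_one (2 * Real.pi * (t - ε))
    simp only [phiD]; nlinarith
  have h2 : t ≤ phiD ε (t + ε) := by
    have := Real.neg_one_le_sin (2 * Real.pi * (t + ε))
    simp only [phiD]; nlinarith
  obtain ⟨x, _, hx⟩ := intermediate_value_Icc (by linarith : t - ε ≤ t + ε)
    hcont.continuousOn (Set.mem_Icc.mpr ⟨h1, h2⟩)
  exact ⟨x, hx⟩

lemma FD_injective {ε : ℝ} (hε0 : 0 ≤ ε) (hε : ε < 1 / (2 * Real.pi)) :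
    Function.Injective (FD ε) := by
  intro v w h
  have h0 := congrFun h 0
  have h1 := congrFun h 1
  have h2 := congrFun h 2
  simp only [FD, Matrix.cons_val_zero, Matrix.cons_val_one, Matrix.head_cons,
    Matrix.cons_val_two, Matrix.tail_cons] at h0 h1 h2
  have hs : v 0 + v 1 = w 0 + w 1 := by linarith
  have hphi : phiD ε (v 0) = phiD ε (w 0) := by simp only [phiD]; linarith
  have hv0 : v 0 = w 0 := (phiD_strictMono hε0 hε).injective hphi
  have hv1 : v 1 = w 1 := by linarith
  have hv2 : v 2 = w 2 := by linarith
  funext i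
  fin_cases i <;> assumption

lemma FD_surjective {ε : ℝ} (hε0 : 0 ≤ ε) : Function.Surjective (FD ε) := by
  intro u
  obtain ⟨x, hx⟩ := phiD_surjective hε0 (u 0 - (u 1 - u 2))
  refine ⟨![x, (u 1 - u 2) - x, u 2 - ((u 1 - u 2) - x)], ?_⟩
  funext i
  simp only [phiD] at hx
  fin_cases i <;> simp [FD] <;> linarith

lemma FD_add_int (ε : ℝ) (w : Fin 3 → ℝ) (m : Fin 3 → ℤ) :
    FD ε (fun i => w i + (m i : ℝ)) 0 = FD ε w 0 + ((2 * m 0 + m 1 : ℤ) : ℝ) ∧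
    FD ε (fun i => w i + (m i : ℝ)) 1 = FD ε w 1 + ((m 0 + 2 * m 1 + m 2 : ℤ) : ℝ) ∧
    FD ε (fun i => w i + (m i : ℝ)) 2 = FD ε w 2 + ((m 1 + m 2 : ℤ) : ℝ) := by
  have hsin : Real.sin (2 * Real.pi * (w 0 + (m 0 : ℝ))) = Real.sin (2 * Real.pi * w 0) := by
    have h : 2 * Real.pi * (w 0 + (m 0 : ℝ)) = 2 * Real.pi * w 0 + (m 0 : ℝ) * (2 * Real.pi) := by
      ring
    rw [h, Real.sin_add_int_mul_two_pi]
  refine ⟨?_, ?_, ?_⟩ <;>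
    simp only [FD, Matrix.cons_val_zero, Matrix.cons_val_one, Matrix.head_cons,
      Matrix.cons_val_two, Matrix.tail_cons, hsin] <;> push_cast <;> ring

lemma torusProj_eq_iff {v w : Fin 3 → ℝ} :
    torusProj v = torusProj w ↔ ∀ i, ∃ k : ℤ, v i - w i = (k : ℝ) := by
  constructor
  · intro h i
    have h' : ((v i : ℝ) : AddCircle (1:ℝ)) = ((w i : ℝ) : AddCircle (1:ℝ)) := congrFun h i
    have hmem : v i - w i ∈ AddSubgroup.zmultiples (1:ℝ) :=
      QuotientAddGroup.eq_iff_sub_mem.mp h'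
    obtain ⟨k, hk⟩ := AddSubgroup.mem_zmultiples_iff.mp hmem
    exact ⟨k, by simpa using hk.symm⟩
  · intro h
    funext i
    obtain ⟨k, hk⟩ := h i
    have hmem : v i - w i ∈ AddSubgroup.zmultiples (1:ℝ) :=
      AddSubgroup.mem_zmultiples_iff.mpr ⟨k, by simpa using hk.symm⟩
    exact QuotientAddGroup.eq_iff_sub_mem.mpr hmem

/-- For `0 ≤ ε < 1/(2π)`, `F_{D,ε} : ℝ³ → ℝ³` is a bijection and the induced map
`f_{D,ε} : 𝕋³ → 𝕋³` is a bijection of the torus. -/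
theorem FD_bijective (ε : ℝ) (hε0 : 0 ≤ ε) (hε : ε < 1 / (2 * Real.pi)) :
    Function.Bijective (FD ε) ∧
    ∀ g : (Fin 3 → AddCircle (1 : ℝ)) → (Fin 3 → AddCircle (1 : ℝ)),
      (∀ v, g (torusProj v) = torusProj (FD ε v)) → Function.Bijective g := by
  have hbij : Function.Bijective (FD ε) := ⟨FD_injective hε0 hε, FD_surjective hε0⟩
  refine ⟨hbij, ?_⟩
  intro g hg
  have hproj_surj : Function.Surjective torusProj := by
    intro p
    exact ⟨fun i => Classical.choose (QuotientAddGroup.mk_surjective (p i)),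
      funext fun i => Classical.choose_spec (QuotientAddGroup.mk_surjective (p i))⟩
  constructor
  · intro p q hpq
    obtain ⟨v, rfl⟩ := hproj_surj p
    obtain ⟨w, rfl⟩ := hproj_surj q
    rw [hg, hg] at hpq
    have hk : ∀ i, ∃ k : ℤ, FD ε v i - FD ε w i = (k : ℝ) := torusProj_eq_iff.mp hpq
    obtain ⟨k0, hk0⟩ := hk 0
    obtain ⟨k1, hk1⟩ := hk 1
    obtain ⟨k2, hk2⟩ := hk 2
    set m : Fin 3 → ℤ := ![k0 - k1 + k2, -k0 + 2*k1 - 2*k2, k0 - 2*k1 + 3*k2] with hm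
    have hm0 : m 0 = k0 - k1 + k2 := rfl
    have hm1 : m 1 = -k0 + 2*k1 - 2*k2 := rfl
    have hm2 : m 2 = k0 - 2*k1 + 3*k2 := rfl
    obtain ⟨e0, e1, e2⟩ := FD_add_int ε w m
    have key : FD ε (fun i => w i + (m i : ℝ)) = FD ε v := by
      funext i
      fin_cases i
      · show FD ε (fun i => w i + (m i : ℝ)) 0 = FD ε v 0
        rw [e0, hm0, hm1]; push_cast; linarith
      · show FD ε (fun i => w i + (m i : ℝ)) 1 = FD ε v 1
        rw [e1, hm0, hm1, hm2]; push_cast; linarith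
      · show FD ε (fun i => w i + (m i : ℝ)) 2 = FD ε v 2
        rw [e2, hm1, hm2]; push_cast; linarith
    have hvw : (fun i => w i + (m i : ℝ)) = v := FD_injective hε0 hε key
    apply torusProj_eq_iff.mpr
    intro i
    refine ⟨m i, ?_⟩
    have := congrFun hvw i
    linarith [congrFun hvw i]
  · intro p
    obtain ⟨u, rfl⟩ := hproj_surj p
    obtain ⟨v, hv⟩ := hbij.2 u
    exact ⟨torusProj v, by rw [hg, hv]⟩
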